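/- Let G = (V,E) be a finite simple graph with |V| = N, let A^1,…,A^{N−1} ⊆ V, let W be the closure of {A^1,…,A^{N−1}} under symmetric difference (the 𝔽₂-span, containing ∅), and suppose (AC, P, R) is Bell data satisfying Requirements 1 and 2 in which every occurring sign sequence is s^A for some independent set A ∈ W. Put S^j = ∏_{v∈A^j} G_v, Q = ∏_{j=1}^{N−1} (I + S^j)/2, and ρ = Q / Tr(Q). Then with the ideal observables (A_i = (X_i+Z_i)/√2, B_i = (X_i−Z_i)/√2 for i ∈ AC and A_i = X_i, B_i = Z_i otherwise), the Bell operator B = Σ_{(s,t)∈P}(B_s + B_t) + Σ_{u∈R} B_u with B_s = ∏_{i∈AC, s_i≠0}(A_i + s_i B_i)·∏_{i∉AC} O_i(s_i) satisfies Tr(ρ B) = 2√2·|P| + |R|; that is, the mixed state ρ also attains the maximal quantum value of the Bell inequality constructed from these stabilizers. -/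

import Mathlib

/-!
STATEMENT 14: the mixed state `ρ = Q / Tr Q`, with `Q = ∏_{j<N-1} (I + S^j)/2`
built from `N−1` stabilizers, also attains the maximal quantum value
`2√2|P| + |R|` of a Bell operator constructed from stabilizer sign sequences
lying in the 𝔽₂-span of the defining family.
-/

open scoped InnerProductSpace

noncomputable section

variable {V : Type} [Fintype V] [DecidableEq V]

/-- The Hilbert space of `|V|` qubits, `ℂ^({0,1}^V)`. -/
abbrev QState (V : Type) [Fintype V] [DecidableEq V] :=
  EuclideanSpace ℂ (V → Bool)

/-- The Pauli `Z` operator on qubit `v`. -/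
def pauliZ (v : V) : QState V →ₗ[ℂ] QState V where
  toFun ψ := WithLp.toLp 2 (fun x => (if x v then -1 else 1) * ψ x)
  map_add' ψ φ := by
    ext x
    simp [mul_add]
  map_smul' c ψ := by
    ext x
    simp [mul_comm, mul_left_comm]

/-- The Pauli `X` operator on qubit `v`. -/
def pauliX (v : V) : QState V →ₗ[ℂ] QState V where
  toFun ψ := WithLp.toLp 2 (fun x => ψ (Function.update x v (!x v)))
  map_add' ψ φ := by ext x; simp
  map_smul' c ψ := by ext x; simp

/-- The stabilizer generator `G_v = X_v ∏_{u ∈ n_v} Z_u` of the graph state. -/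
def stabGen (G : SimpleGraph V) [DecidableRel G.Adj] (v : V) :
    QState V →ₗ[ℂ] QState V :=
  pauliX v * ((G.neighborFinset v).toList.map pauliZ).prod

/-- The stabilizer sign sequence `s^A` of an independent set `A`. -/
def signSeq (G : SimpleGraph V) [DecidableRel G.Adj] (A : Finset V) (v : V) : ℤ :=
  if v ∈ A then 1 else if Odd (G.neighborFinset v ∩ A).card then -1 else 0

/-- Observable associated to the symbol `k`. -/
def obsV (Ao Bo : V → QState V →ₗ[ℂ] QState V) (i : V) (k : ℤ) :
    QState V →ₗ[ℂ] QState V :=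
  if k = 1 then Ao i else if k = -1 then Bo i else 1

/-- The Bell operator term
`B_s = ∏_{i∈AC, s_i≠0} (A_i + s_i B_i) · ∏_{i∉AC} O_i(s_i)`. -/
def bellTermV (Ao Bo : V → QState V →ₗ[ℂ] QState V) (AC : Finset V)
    (s : V → ℤ) : QState V →ₗ[ℂ] QState V :=
  ((Finset.univ.filter fun i : V => i ∈ AC ∧ s i ≠ 0).toList.map
      (fun i => Ao i + s i • Bo i)).prod *
  ((Finset.univ.filter fun i : V => i ∉ AC).toList.map
      (fun i => obsV Ao Bo i (s i))).prod

/-- The ideal observable `A_i`: `(X_i + Z_i)/√2` for `i ∈ AC`, `X_i` otherwise. -/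
def idealA (AC : Finset V) (i : V) : QState V →ₗ[ℂ] QState V :=
  if i ∈ AC then ((Real.sqrt 2 : ℝ) : ℂ)⁻¹ • (pauliX i + pauliZ i) else pauliX i

/-- The ideal observable `B_i`: `(X_i − Z_i)/√2` for `i ∈ AC`, `Z_i` otherwise. -/
def idealB (AC : Finset V) (i : V) : QState V →ₗ[ℂ] QState V :=
  if i ∈ AC then ((Real.sqrt 2 : ℝ) : ℂ)⁻¹ • (pauliX i - pauliZ i) else pauliZ i

/-- Membership of `A` in the 𝔽₂-span (closure under symmetric difference,
including `∅`) of the family `Afam`, expressed via indicator functions with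
values in `ZMod 2`. -/
def memSpan (Afam : Fin n → Finset V) (A : Finset V) : Prop :=
  ∃ S : Finset (Fin n), ∀ v : V,
    (if v ∈ A then (1 : ZMod 2) else 0) =
      ∑ j ∈ S, (if v ∈ Afam j then (1 : ZMod 2) else 0)

/-!
Every operator in sight is a Pauli string `Z^b X^a`. Each factor `A_i + s_i B_i` of a Bell
term is `√2 X_i` or `√2 Z_i` on `AC` and a single Pauli off `AC`, so for an independent set
`A` the Bell term of `s^A` is `√2 ^ k · S_A` with `S_A = ∏_{v ∈ A} G_v` and
`k = #{i ∈ AC | s^A_i ≠ 0}`. The generators `G_v` commute and square to `1`, so inside the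
commutative algebra they generate `A ↦ S_A` turns symmetric differences into products, and
`(1 + S^j) S^j = 1 + S^j` gives `Q S_A = Q` for every `A` in the span. Hence
`Tr (ρ B_{s^A}) = √2 ^ k`, and Requirements 1 and 2 make `k = 1` on both members of a pair in
`P` and `k = 0` on `R`. Finally `Tr Q ≠ 0`: expanding the product writes `Q` as
`2^{-(N-1)} ∑_T S_{C_T}`, and `Tr S_C` is `2^N` for `C = ∅` and `0` otherwise.
-/

open scoped symmDiff IsMulCommutative

theorem Finset.prod_mul_prod_eq_prod_symmDiff {ι M : Type*} [DecidableEq ι] [CommMonoid M]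
    {f : ι → M} (hf : ∀ i, f i * f i = 1) (s t : Finset ι) :
    (∏ i ∈ s, f i) * ∏ i ∈ t, f i = ∏ i ∈ s ∆ t, f i := by
  have hsq : (∏ i ∈ s ∩ t, f i) * ∏ i ∈ s ∩ t, f i = 1 := by
    rw [← Finset.prod_mul_distrib]
    exact Finset.prod_eq_one fun i _ => hf i
  rw [← Finset.prod_union_inter, symmDiff_eq_sup_sdiff_inf,
    ← Finset.prod_sdiff (Finset.inter_subset_union (s := s) (t := t)), mul_assoc, hsq, mul_one]
  rfl

def pauliSign {ι : Type*} [Fintype ι] (b x : ι → Bool) : ℂ :=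
  ∏ v, if b v && x v then -1 else 1

lemma pauliSign_bot_left {ι : Type*} [Fintype ι] (x : ι → Bool) : pauliSign ⊥ x = 1 := by
  simp [pauliSign]

lemma pauliSign_mul_pauliSign {ι : Type*} [Fintype ι] (a b b' x : ι → Bool) :
    pauliSign b x * pauliSign b' (a ∆ x) = pauliSign b' a * pauliSign (b ∆ b') x := by
  simp only [pauliSign, ← Finset.prod_mul_distrib, Pi.symmDiff_apply, Bool.symmDiff_eq_xor]
  refine Finset.prod_congr rfl fun v _ => ?_
  cases a v <;> cases b v <;> cases b' v <;> cases x v <;> norm_num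

lemma pauliSign_single {ι : Type*} [Fintype ι] [DecidableEq ι] (b : ι → Bool) (u : ι) :
    pauliSign b (fun w => decide (w = u)) = if b u then -1 else 1 :=
  (Fintype.prod_eq_single u fun w hw => by simp [hw]).trans (by simp)

/-- The Pauli string `Z^b X^a = ∏_{b v} Z_v ∏_{a v} X_v`. -/
def pauliString (a b : V → Bool) : QState V →ₗ[ℂ] QState V where
  toFun ψ := WithLp.toLp 2 fun x => pauliSign b x * ψ (a ∆ x)
  map_add' ψ φ := by ext x; simp [mul_add]
  map_smul' c ψ := by ext x; simp [mul_left_comm]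

@[simp]
lemma pauliString_apply (a b : V → Bool) (ψ : QState V) (x : V → Bool) :
    pauliString a b ψ x = pauliSign b x * ψ (a ∆ x) := rfl

lemma pauliString_mul (a b a' b' : V → Bool) :
    pauliString a b * pauliString a' b' = pauliSign b' a • pauliString (a ∆ a') (b ∆ b') := by
  ext ψ x
  simp only [Module.End.mul_apply, pauliString_apply, LinearMap.smul_apply, PiLp.smul_apply,
    smul_eq_mul, ← mul_assoc, pauliSign_mul_pauliSign]
  rw [symmDiff_assoc, symmDiff_left_comm]

lemma pauliString_bot : pauliString (⊥ : V → Bool) ⊥ = 1 := by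
  ext ψ x
  simp [pauliSign_bot_left]

lemma trace_pauliString {a : V → Bool} (ha : a ≠ ⊥) (b : V → Bool) :
    LinearMap.trace ℂ (QState V) (pauliString a b) = 0 := by
  rw [LinearMap.trace_eq_matrix_trace ℂ (PiLp.basisFun 2 ℂ (V → Bool))]
  refine Finset.sum_eq_zero fun x _ => ?_
  have hx : a ∆ x ≠ x := fun h => ha (by simpa using congrArg (· ∆ x) h)
  simp [LinearMap.toMatrix_apply, hx]

def localPauli (i : V) (p q : Bool) : QState V →ₗ[ℂ] QState V :=
  pauliString (fun u => decide (u = i) && p) (fun u => decide (u = i) && q)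

lemma list_prod_localPauli (l : List V) (hl : l.Nodup) (α β : V → Bool) :
    (l.map fun i => localPauli i (α i) (β i)).prod =
      pauliString (fun u => decide (u ∈ l) && α u) (fun u => decide (u ∈ l) && β u) := by
  induction l with
  | nil =>
    simp only [List.map_nil, List.prod_nil, List.not_mem_nil, decide_false, Bool.false_and]
    exact pauliString_bot.symm
  | cons i t ih =>
    obtain ⟨hi, ht⟩ := List.nodup_cons.1 hl
    have hsign : pauliSign (fun u => decide (u ∈ t) && β u) (fun u => decide (u = i) && α i) = 1 :=
      Finset.prod_eq_one fun v _ => by by_cases hv : v = i <;> simp_all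
    rw [List.map_cons, List.prod_cons, ih ht, localPauli, pauliString_mul, hsign, one_smul]
    congr 1 <;> funext u <;> by_cases hu : u = i <;> simp_all

lemma localPauli_false_false (i : V) : localPauli i false false = 1 := by
  simp only [localPauli, Bool.and_false]
  exact pauliString_bot

lemma pauliX_eq_localPauli (i : V) : pauliX i = localPauli i true false := by
  ext ψ x
  have hx : Function.update x i (!x i) = (fun u => decide (u = i) && true) ∆ x := by
    funext u
    by_cases hu : u = i <;> simp [hu, Function.update]
  simp [localPauli, pauliSign, pauliX, hx]

lemma pauliZ_eq_localPauli (i : V) : pauliZ i = localPauli i false true := by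
  ext ψ x
  have hsign : pauliSign (fun u => decide (u = i) && true) x = if x i then -1 else 1 :=
    (Fintype.prod_eq_single i fun u hu => by simp [hu]).trans (by simp)
  have hx : (fun u => decide (u = i) && false) ∆ x = x := by
    simp only [Bool.and_false]
    exact bot_symmDiff x
  simp only [localPauli, pauliString_apply, hsign, hx]
  rfl

def signPauli (s : V → ℤ) : QState V →ₗ[ℂ] QState V :=
  pauliString (fun u => decide (s u = 1)) (fun u => decide (s u = -1))

lemma indicator_symmDiff {α : Type*} [DecidableEq α] (A B : Finset α) (v : α) :
    (if v ∈ A ∆ B then (1 : ZMod 2) else 0) =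
      (if v ∈ A then 1 else 0) + (if v ∈ B then 1 else 0) := by
  by_cases hA : v ∈ A <;> by_cases hB : v ∈ B <;>
    simp [Finset.mem_symmDiff, hA, hB, CharTwo.add_self_eq_zero]

section GraphState

variable (G : SimpleGraph V) [DecidableRel G.Adj]

lemma stabGen_eq_pauliString (v : V) :
    stabGen G v = pauliString (fun u => decide (u = v)) (fun u => decide (G.Adj v u)) := by
  have hZ := list_prod_localPauli (G.neighborFinset v).toList (Finset.nodup_toList _)
    (fun _ => false) (fun _ => true)
  simp only [← pauliZ_eq_localPauli, Finset.mem_toList, SimpleGraph.mem_neighborFinset,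
    Bool.and_false, Bool.and_true] at hZ
  rw [stabGen, hZ, pauliX_eq_localPauli, localPauli, pauliString_mul]
  simp only [Bool.and_true, Bool.and_false, pauliSign_single, SimpleGraph.irrefl, decide_false,
    Bool.false_eq_true, if_false, one_smul]
  exact congrArg₂ _ (symmDiff_bot _) (bot_symmDiff _)

lemma stabGen_mul_self (v : V) : stabGen G v * stabGen G v = 1 := by
  rw [stabGen_eq_pauliString, pauliString_mul, pauliSign_single, symmDiff_self, symmDiff_self]
  simp [pauliString_bot]

lemma commute_stabGen (u v : V) : Commute (stabGen G u) (stabGen G v) := by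
  simp only [Commute, SemiconjBy, stabGen_eq_pauliString, pauliString_mul, pauliSign_single,
    G.adj_comm u v, symmDiff_comm (fun w => decide (w = u)),
    symmDiff_comm (fun w => decide (G.Adj u w))]

lemma decide_odd_card_neighborFinset_inter_insert {a : V} {A : Finset V} (ha : a ∉ A) (u : V) :
    decide (Odd (G.neighborFinset u ∩ insert a A).card) =
      (decide (G.Adj a u) ^^ decide (Odd (G.neighborFinset u ∩ A).card)) := by
  by_cases hau : G.Adj a u
  · rw [Finset.inter_insert_of_mem (by simpa [G.adj_comm] using hau),
      Finset.card_insert_of_notMem (by simp [ha])]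
    simp [hau, Nat.odd_add_one, -Nat.not_odd_iff_even]
  · rw [Finset.inter_insert_of_notMem (by simpa [G.adj_comm] using hau)]
    simp [hau]

lemma neighborFinset_inter_eq_empty_of_independent {A : Finset V}
    (hA : ∀ u ∈ A, ∀ w ∈ A, ¬ G.Adj u w) {u : V} (hu : u ∈ A) : G.neighborFinset u ∩ A = ∅ :=
  Finset.eq_empty_of_forall_notMem fun w hw => by
    simp only [Finset.mem_inter, SimpleGraph.mem_neighborFinset] at hw
    exact hA u hu w hw.2 hw.1

lemma signSeq_trichotomy (A : Finset V) (i : V) :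
    signSeq G A i = 1 ∨ signSeq G A i = -1 ∨ signSeq G A i = 0 := by
  unfold signSeq
  split_ifs <;> simp

lemma signPauli_signSeq {A : Finset V} (hA : ∀ u ∈ A, ∀ w ∈ A, ¬ G.Adj u w) :
    signPauli (signSeq G A) = pauliString (fun u => decide (u ∈ A))
      (fun u => decide (Odd (G.neighborFinset u ∩ A).card)) := by
  unfold signPauli signSeq
  congr 1 <;> funext u <;> by_cases hu : u ∈ A
  · simp [hu]
  · by_cases hodd : Odd (G.neighborFinset u ∩ A).card <;> simp [hu, hodd]
  · simp [hu, neighborFinset_inter_eq_empty_of_independent G hA hu]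
  · by_cases hodd : Odd (G.neighborFinset u ∩ A).card <;> simp [hu, hodd]

def stabilizerAlgebra : Subalgebra ℂ (QState V →ₗ[ℂ] QState V) :=
  Algebra.adjoin ℂ (Set.range (stabGen G))

instance : IsMulCommutative (stabilizerAlgebra G) :=
  Algebra.isMulCommutative_adjoin ℂ <| by
    rintro _ ⟨u, rfl⟩ _ ⟨v, rfl⟩
    exact commute_stabGen G u v

def stab (v : V) : stabilizerAlgebra G :=
  ⟨stabGen G v, Algebra.subset_adjoin ⟨v, rfl⟩⟩

def stabProd (A : Finset V) : stabilizerAlgebra G :=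
  ∏ v ∈ A, stab G v

lemma coe_stabProd (A : Finset V) :
    (stabProd G A : QState V →ₗ[ℂ] QState V) = (A.toList.map (stabGen G)).prod := by
  rw [stabProd, ← Finset.prod_map_toList, SubmonoidClass.coe_list_prod, List.map_map]
  rfl

lemma stab_mul_self (v : V) : stab G v * stab G v = 1 :=
  Subtype.ext (stabGen_mul_self G v)

lemma stabProd_mul_stabProd (A B : Finset V) :
    stabProd G A * stabProd G B = stabProd G (A ∆ B) :=
  Finset.prod_mul_prod_eq_prod_symmDiff (stab_mul_self G) A B

lemma exists_coe_stabProd_eq_smul_pauliString (A : Finset V) :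
    ∃ (c : ℂ) (b : V → Bool),
      (stabProd G A : QState V →ₗ[ℂ] QState V) = c • pauliString (fun u => decide (u ∈ A)) b := by
  induction A using Finset.induction_on with
  | empty =>
    refine ⟨1, ⊥, ?_⟩
    simp only [stabProd, Finset.prod_empty, Finset.notMem_empty, decide_false, one_smul]
    exact pauliString_bot.symm
  | @insert a A ha ih =>
    obtain ⟨c, b, hc⟩ := ih
    refine ⟨c * pauliSign b (fun u => decide (u = a)), (fun u => decide (G.Adj a u)) ∆ b, ?_⟩
    rw [stabProd, Finset.prod_insert ha, Subalgebra.coe_mul, ← stabProd, hc, mul_smul_comm]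
    change c • (stabGen G a * _) = _
    rw [stabGen_eq_pauliString, pauliString_mul, smul_smul]
    congr 2
    funext u
    by_cases hu : u = a <;> simp_all

lemma trace_stabProd (A : Finset V) :
    LinearMap.trace ℂ (QState V) (stabProd G A) =
      if A = ∅ then (Module.finrank ℂ (QState V) : ℂ) else 0 := by
  split_ifs with hA
  · simp [hA, stabProd]
  · obtain ⟨c, b, hc⟩ := exists_coe_stabProd_eq_smul_pauliString G A
    obtain ⟨v, hv⟩ := Finset.nonempty_iff_ne_empty.2 hA
    have hne : (fun u => decide (u ∈ A)) ≠ ⊥ := fun h => by simpa [hv] using congrFun h v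
    rw [hc, map_smul, trace_pauliString hne, smul_zero]

lemma coe_stabProd_of_independent {A : Finset V} (hA : ∀ u ∈ A, ∀ w ∈ A, ¬ G.Adj u w) :
    (stabProd G A : QState V →ₗ[ℂ] QState V) = pauliString (fun u => decide (u ∈ A))
      (fun u => decide (Odd (G.neighborFinset u ∩ A).card)) := by
  induction A using Finset.induction_on with
  | empty =>
    simp only [stabProd, Finset.prod_empty, Finset.notMem_empty, Finset.inter_empty,
      Finset.card_empty, decide_false, Nat.not_odd_zero]
    exact pauliString_bot.symm
  | @insert a A ha ih =>
    have hnbr : G.neighborFinset a ∩ A = ∅ := by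
      simpa using neighborFinset_inter_eq_empty_of_independent G hA (Finset.mem_insert_self a A)
    rw [stabProd, Finset.prod_insert ha, Subalgebra.coe_mul, ← stabProd,
      ih fun u hu w hw => hA u (Finset.mem_insert_of_mem hu) w (Finset.mem_insert_of_mem hw)]
    change stabGen G a * _ = _
    rw [stabGen_eq_pauliString, pauliString_mul, pauliSign_single, hnbr]
    simp only [Finset.card_empty, Nat.not_odd_zero, decide_false, Bool.false_eq_true, if_false,
      one_smul]
    congr 1 <;> funext u
    · by_cases hu : u = a <;> simp_all
    · simp [decide_odd_card_neighborFinset_inter_insert G ha]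

lemma stabProd_eq_prod_of_indicator {ι : Type*} (Afam : ι → Finset V) (S : Finset ι)
    (A : Finset V) (hA : ∀ v, (if v ∈ A then (1 : ZMod 2) else 0) =
      ∑ j ∈ S, if v ∈ Afam j then 1 else 0) :
    stabProd G A = ∏ j ∈ S, stabProd G (Afam j) := by
  classical
  induction S using Finset.induction_on generalizing A with
  | empty =>
    have : A = ∅ := Finset.eq_empty_of_forall_notMem fun v hv => by simpa [hv] using hA v
    simp [this, stabProd]
  | @insert k S hk ih =>
    have hA' : ∀ v, (if v ∈ A ∆ Afam k then (1 : ZMod 2) else 0) =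
        ∑ j ∈ S, if v ∈ Afam j then 1 else 0 := fun v => by
      rw [indicator_symmDiff, hA, Finset.sum_insert hk, add_comm, ← add_assoc,
        CharTwo.add_self_eq_zero, zero_add]
    rw [Finset.prod_insert hk, ← ih _ hA', mul_comm, stabProd_mul_stabProd,
      symmDiff_symmDiff_cancel_right]

lemma exists_stabProd_eq_prod {ι : Type*} (Afam : ι → Finset V) (T : Finset ι) :
    ∃ C, ∏ j ∈ T, stabProd G (Afam j) = stabProd G C :=
  Finset.prod_induction _ (fun x => ∃ C, x = stabProd G C)
    (fun _ _ ⟨C, hC⟩ ⟨D, hD⟩ => ⟨C ∆ D, by rw [hC, hD, stabProd_mul_stabProd]⟩)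
    ⟨∅, rfl⟩ fun _ _ => ⟨_, rfl⟩

def stabProjector {ι : Type*} [Fintype ι] (Afam : ι → Finset V) : stabilizerAlgebra G :=
  ∏ j, (2 : ℂ)⁻¹ • (1 + stabProd G (Afam j))

lemma coe_stabProjector {n : ℕ} (Afam : Fin n → Finset V) :
    (stabProjector G Afam : QState V →ₗ[ℂ] QState V) =
      ((List.finRange n).map fun j =>
        (2 : ℂ)⁻¹ • (1 + ((Afam j).toList.map (stabGen G)).prod)).prod := by
  simp only [stabProjector, Fin.prod_univ_def, SubmonoidClass.coe_list_prod, List.map_map]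
  congr 1
  refine List.map_congr_left fun j _ => ?_
  simp [coe_stabProd]

lemma stabProjector_mul_stabProd {ι : Type*} [Fintype ι] (Afam : ι → Finset V) (k : ι) :
    stabProjector G Afam * stabProd G (Afam k) = stabProjector G Afam := by
  classical
  have hk : ((2 : ℂ)⁻¹ • (1 + stabProd G (Afam k))) * stabProd G (Afam k) =
      (2 : ℂ)⁻¹ • (1 + stabProd G (Afam k)) := by
    rw [smul_mul_assoc, add_mul, one_mul, stabProd_mul_stabProd, symmDiff_self, add_comm]
    rfl
  rw [stabProjector, ← Finset.mul_prod_erase _ _ (Finset.mem_univ k), mul_right_comm, hk]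

lemma stabProjector_mul_stabProd_of_memSpan {n : ℕ} (Afam : Fin n → Finset V) {A : Finset V}
    (hA : memSpan Afam A) : stabProjector G Afam * stabProd G A = stabProjector G Afam := by
  obtain ⟨S, hS⟩ := hA
  rw [stabProd_eq_prod_of_indicator G Afam S A hS]
  clear hS
  induction S using Finset.induction_on with
  | empty => rw [Finset.prod_empty, mul_one]
  | @insert k S hk ih => rw [Finset.prod_insert hk, ← mul_assoc, stabProjector_mul_stabProd, ih]

lemma trace_stabProjector_ne_zero {ι : Type*} [Fintype ι] (Afam : ι → Finset V) :
    LinearMap.trace ℂ (QState V) (stabProjector G Afam) ≠ 0 := by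
  have hexpand : stabProjector G Afam = (2 : ℂ)⁻¹ ^ Fintype.card ι •
      ∑ T ∈ Finset.univ.powerset, ∏ j ∈ T, stabProd G (Afam j) := by
    rw [stabProjector, ← Finset.smul_prod, Finset.prod_one_add, Finset.card_univ]
  -- every term has trace `0` or `2^N`, and the term `T = ∅` has trace `2^N`
  have hpos : 0 < (LinearMap.trace ℂ (QState V)
      (∑ T ∈ Finset.univ.powerset, ∏ j ∈ T, stabProd G (Afam j) :
        stabilizerAlgebra G)).re := by
    rw [AddSubmonoidClass.coe_finsetSum, map_sum, Complex.re_sum]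
    refine lt_of_lt_of_le ?_ (Finset.single_le_sum (fun T _ => ?_) (Finset.empty_mem_powerset _))
    · rw [Finset.prod_empty, OneMemClass.coe_one, LinearMap.trace_one, Complex.natCast_re]
      exact_mod_cast Module.finrank_pos
    · obtain ⟨C, hC⟩ := exists_stabProd_eq_prod G Afam T
      rw [hC, trace_stabProd]
      split_ifs <;> simp only [Complex.natCast_re, Complex.zero_re, Nat.cast_nonneg, le_refl]
  rw [hexpand, Subalgebra.coe_smul, map_smul, smul_eq_mul]
  exact mul_ne_zero (by norm_num) fun h => hpos.ne' (by rw [h, Complex.zero_re])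

end GraphState

lemma inv_sqrt_two_mul_two : ((Real.sqrt 2 : ℝ) : ℂ)⁻¹ * 2 = Real.sqrt 2 := by
  have h : ((Real.sqrt 2 : ℝ) : ℂ) ≠ 0 := by exact_mod_cast Real.sqrt_ne_zero'.2 two_pos
  rw [inv_mul_eq_iff_eq_mul₀ h, ← Complex.ofReal_mul, Real.mul_self_sqrt zero_le_two,
    Complex.ofReal_ofNat]

lemma idealA_add_zsmul_idealB {AC : Finset V} {i : V} (hi : i ∈ AC) {k : ℤ}
    (hk : k = 1 ∨ k = -1) :
    idealA AC i + k • idealB AC i =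
      ((Real.sqrt 2 : ℝ) : ℂ) • localPauli i (decide (k = 1)) (decide (k = -1)) := by
  rw [idealA, idealB, if_pos hi, if_pos hi]
  rcases hk with rfl | rfl
  · have h : pauliX i + pauliZ i + (pauliX i - pauliZ i) = (2 : ℂ) • pauliX i := by
      rw [two_smul]; abel
    rw [one_zsmul, ← smul_add, h, smul_smul, inv_sqrt_two_mul_two, pauliX_eq_localPauli]
    rfl
  · have h : pauliX i + pauliZ i + -(pauliX i - pauliZ i) = (2 : ℂ) • pauliZ i := by
      rw [two_smul]; abel
    rw [neg_one_zsmul, ← smul_neg, ← smul_add, h, smul_smul, inv_sqrt_two_mul_two,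
      pauliZ_eq_localPauli]
    rfl

lemma obsV_ideal_of_notMem {AC : Finset V} {i : V} (hi : i ∉ AC) {k : ℤ}
    (hk : k = 1 ∨ k = -1 ∨ k = 0) :
    obsV (idealA AC) (idealB AC) i k = localPauli i (decide (k = 1)) (decide (k = -1)) := by
  rcases hk with rfl | rfl | rfl
  · simp [obsV, idealA, hi, pauliX_eq_localPauli]
  · simp [obsV, idealB, hi, pauliZ_eq_localPauli]
  · simp [obsV, localPauli_false_false]

lemma bellTermV_ideal {AC : Finset V} {s : V → ℤ} (hs : ∀ i, s i = 1 ∨ s i = -1 ∨ s i = 0) :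
    bellTermV (idealA AC) (idealB AC) AC s =
      ((Real.sqrt 2 : ℝ) : ℂ) ^ (Finset.univ.filter fun i => i ∈ AC ∧ s i ≠ 0).card •
        signPauli s := by
  set F₁ := Finset.univ.filter fun i : V => i ∈ AC ∧ s i ≠ 0
  set F₂ := Finset.univ.filter fun i : V => i ∉ AC
  set L := fun i => localPauli i (decide (s i = 1)) (decide (s i = -1))
  have h₁ : F₁.toList.map (fun i => idealA AC i + s i • idealB AC i) =
      (F₁.toList.map L).map (((Real.sqrt 2 : ℝ) : ℂ) • ·) := by
    rw [List.map_map]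
    refine List.map_congr_left fun i hi => ?_
    obtain ⟨hiAC, hi0⟩ : i ∈ AC ∧ s i ≠ 0 := by simpa [F₁] using hi
    exact idealA_add_zsmul_idealB hiAC ((hs i).imp_right fun h => h.resolve_right hi0)
  have h₂ : F₂.toList.map (fun i => obsV (idealA AC) (idealB AC) i (s i)) = F₂.toList.map L :=
    List.map_congr_left fun i hi => obsV_ideal_of_notMem (by simpa [F₂] using hi) (hs i)
  have hnodup : (F₁.toList ++ F₂.toList).Nodup :=
    (F₁.nodup_toList.append F₂.nodup_toList) fun i hi₁ hi₂ => by simp_all [F₁, F₂]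
  rw [bellTermV, h₁, h₂, ← List.smul_prod, smul_mul_assoc, ← List.prod_append, ← List.map_append,
    list_prod_localPauli _ hnodup, List.length_map, Finset.length_toList, signPauli]
  congr 2 <;> funext u <;> by_cases hu : u ∈ AC <;> simp [F₁, F₂, hu] <;> omega

lemma bellTermV_ideal_signSeq (G : SimpleGraph V) [DecidableRel G.Adj] (AC : Finset V)
    {A : Finset V} (hA : ∀ u ∈ A, ∀ w ∈ A, ¬ G.Adj u w) :
    bellTermV (idealA AC) (idealB AC) AC (signSeq G A) =
      ((Real.sqrt 2 : ℝ) : ℂ) ^ (Finset.univ.filter fun i => i ∈ AC ∧ signSeq G A i ≠ 0).card •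
        (stabProd G A : QState V →ₗ[ℂ] QState V) := by
  rw [bellTermV_ideal (signSeq_trichotomy G A), signPauli_signSeq G hA,
    coe_stabProd_of_independent G hA]

lemma trace_inv_smul_stabProjector_mul_bellTermV (G : SimpleGraph V) [DecidableRel G.Adj]
    {n : ℕ} (Afam : Fin n → Finset V) (AC : Finset V) {A : Finset V}
    (hA : ∀ u ∈ A, ∀ w ∈ A, ¬ G.Adj u w) (hspan : memSpan Afam A) :
    LinearMap.trace ℂ (QState V)
        ((LinearMap.trace ℂ (QState V) (stabProjector G Afam))⁻¹ •
            (stabProjector G Afam : QState V →ₗ[ℂ] QState V) *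
          bellTermV (idealA AC) (idealB AC) AC (signSeq G A)) =
      ((Real.sqrt 2 : ℝ) : ℂ) ^ (Finset.univ.filter fun i => i ∈ AC ∧ signSeq G A i ≠ 0).card := by
  rw [bellTermV_ideal_signSeq G AC hA, smul_mul_smul_comm, ← Subalgebra.coe_mul,
    stabProjector_mul_stabProd_of_memSpan G Afam hspan, map_smul, smul_eq_mul, mul_assoc,
    mul_comm (_ ^ _), inv_mul_cancel_left₀ (trace_stabProjector_ne_zero G Afam)]

lemma card_filter_mem_and_ne_zero_eq_one {AC : Finset V} {s : V → ℤ} {T : V} (hT : T ∈ AC)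
    (hsT : s T ≠ 0) (hs : ∀ i ∈ AC, i ≠ T → s i = 0) :
    (Finset.univ.filter fun i => i ∈ AC ∧ s i ≠ 0).card = 1 :=
  Finset.card_eq_one.2 ⟨T, Finset.ext fun i => by
    simp only [Finset.mem_filter, Finset.mem_univ, true_and, Finset.mem_singleton]
    exact ⟨fun ⟨hi, hsi⟩ => by_contra fun hiT => hsi (hs i hi hiT), fun h => h ▸ ⟨hT, hsT⟩⟩⟩

lemma card_filter_mem_and_ne_zero_eq_zero {AC : Finset V} {s : V → ℤ} (hs : ∀ i ∈ AC, s i = 0) :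
    (Finset.univ.filter fun i => i ∈ AC ∧ s i ≠ 0).card = 0 :=
  Finset.card_eq_zero.2 <| Finset.filter_eq_empty_iff.2 fun i _ ⟨hi, hsi⟩ => hsi (hs i hi)

theorem mixed_state_attains_quantum_bound
    (G : SimpleGraph V) [DecidableRel G.Adj]
    (Afam : Fin (Fintype.card V - 1) → Finset V)
    (AC : Finset V)
    (P : List ((V → ℤ) × (V → ℤ))) (R : List (V → ℤ))
    -- every occurring sign sequence comes from an independent set in the span
    (hstabP : ∀ p ∈ P,
      (∃ A : Finset V, (∀ u ∈ A, ∀ w ∈ A, ¬ G.Adj u w) ∧ memSpan Afam A ∧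
        p.1 = signSeq G A) ∧
      (∃ A : Finset V, (∀ u ∈ A, ∀ w ∈ A, ¬ G.Adj u w) ∧ memSpan Afam A ∧
        p.2 = signSeq G A))
    (hstabR : ∀ u ∈ R,
      ∃ A : Finset V, (∀ x ∈ A, ∀ y ∈ A, ¬ G.Adj x y) ∧ memSpan Afam A ∧
        u = signSeq G A)
    -- Requirement 1
    (hreq1 : ∀ p ∈ P, ∃ T ∈ AC, p.1 T * p.2 T = -1 ∧
      ∀ i ∈ AC, i ≠ T → p.1 i = 0 ∧ p.2 i = 0)
    -- Requirement 2
    (hreq2 : ∀ u ∈ R, ∀ i ∈ AC, u i = 0)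
    -- the stabilizers S^j, the projector Q and the mixed state ρ
    (Sop : Fin (Fintype.card V - 1) → (QState V →ₗ[ℂ] QState V))
    (hSop : ∀ j, Sop j = ((Afam j).toList.map (stabGen G)).prod)
    (Q : QState V →ₗ[ℂ] QState V)
    (hQ : Q = ((List.finRange (Fintype.card V - 1)).map
        (fun j => (2 : ℂ)⁻¹ • (1 + Sop j))).prod)
    (ρ : QState V →ₗ[ℂ] QState V)
    (hρ : ρ = (LinearMap.trace ℂ (QState V) Q)⁻¹ • Q) :
    LinearMap.trace ℂ (QState V)
        (ρ * ((P.map (fun p => bellTermV (idealA AC) (idealB AC) AC p.1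
                              + bellTermV (idealA AC) (idealB AC) AC p.2)).sum
              + (R.map (fun u => bellTermV (idealA AC) (idealB AC) AC u)).sum))
      = ((2 * Real.sqrt 2 * P.length + R.length : ℝ) : ℂ) := by
  have hQ' : Q = stabProjector G Afam := by simp only [hQ, hSop, coe_stabProjector]
  set τ := LinearMap.trace ℂ (QState V) ∘ₗ LinearMap.mulLeft ℂ ρ
  have hterm : ∀ s, (∃ A : Finset V, (∀ u ∈ A, ∀ w ∈ A, ¬ G.Adj u w) ∧ memSpan Afam A ∧
      s = signSeq G A) → τ (bellTermV (idealA AC) (idealB AC) AC s) =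
        ((Real.sqrt 2 : ℝ) : ℂ) ^ (Finset.univ.filter fun i => i ∈ AC ∧ s i ≠ 0).card := by
    rintro s ⟨A, hA, hspan, rfl⟩
    rw [← trace_inv_smul_stabProjector_mul_bellTermV G Afam AC hA hspan, ← hQ', ← hρ]
    rfl
  have hP : ∀ p ∈ P, τ (bellTermV (idealA AC) (idealB AC) AC p.1 +
      bellTermV (idealA AC) (idealB AC) AC p.2) = 2 * ((Real.sqrt 2 : ℝ) : ℂ) := fun p hp => by
    obtain ⟨T, hT, hTT, hzero⟩ := hreq1 p hp
    have hTT' : p.1 T * p.2 T ≠ 0 := by rw [hTT]; norm_num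
    rw [map_add, hterm _ (hstabP p hp).1, hterm _ (hstabP p hp).2,
      card_filter_mem_and_ne_zero_eq_one hT (left_ne_zero_of_mul hTT')
        fun i hi hiT => (hzero i hi hiT).1,
      card_filter_mem_and_ne_zero_eq_one hT (right_ne_zero_of_mul hTT')
        fun i hi hiT => (hzero i hi hiT).2]
    ring
  have hR : ∀ u ∈ R, τ (bellTermV (idealA AC) (idealB AC) AC u) = 1 := fun u hu => by
    rw [hterm u (hstabR u hu), card_filter_mem_and_ne_zero_eq_zero (hreq2 u hu), pow_zero]
  change τ _ = _
  rw [map_add, map_list_sum, map_list_sum, List.map_map, List.map_map, Function.comp_def,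
    Function.comp_def,
    List.sum_eq_card_nsmul _ _ (List.forall_mem_map.2 hP),
    List.sum_eq_card_nsmul _ _ (List.forall_mem_map.2 hR), List.length_map, List.length_map,
    nsmul_eq_mul, nsmul_eq_mul]
  push_cast
  ring
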